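/- Let G be a Tararin group with rational series {1} = G₀ ◁ G₁ ◁ ⋯ ◁ G_m = G. Then G admits exactly 2^m left-orderings, every left-ordering of G is Conradian, and in every left-ordering of G the convex subgroups are exactly G₀, G₁, …, G_m. -/

import Mathlib

/-! In every left-ordering of a Tararin group each term `G_i` of the rational series is convex.
This goes up the series. If `G_{j-1}` is convex in `G_j`, then the ordering descends to the
rank-one quotient `G_j / G_{j-1} ⊆ ℚ`, so on `G_j \ G_{j-1}` positivity is the sign of `φ_{j-1}`
up to one global sign. An element `g` of `G_{j+1}` acting on that quotient by a negative rational
then lies between no two elements of `G_j`; as `G_{j+1} / G_j` has rank one, a power of `g` is a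
power of any `z ∈ G_{j+1} \ G_j` modulo `G_j`, so no such `z` is bounded by `G_j` either.

Hence a left-ordering is the lexicographic ordering given by its `m` signs, every choice of signs
defines one, such orderings are Conradian, and a convex subgroup is some `G_i`: convex subgroups
form a chain and are closed under roots, and a rank-one quotient has no proper root-closed
nontrivial subgroups. -/

structure LeftOrder (G : Type*) [Group G] where
  lt : G → G → Prop
  irrefl : ∀ a, ¬ lt a a
  trans : ∀ a b c, lt a b → lt b c → lt a c
  total : ∀ a b, lt a b ∨ a = b ∨ lt b a
  mul_left : ∀ a b c, lt a b → lt (c * a) (c * b)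

namespace LeftOrder

variable {G : Type*} [Group G]

def le (o : LeftOrder G) (a b : G) : Prop := o.lt a b ∨ a = b

noncomputable def cone (o : LeftOrder G) : G → Bool :=
  fun g => @decide (o.lt 1 g) (Classical.propDecidable _)

noncomputable instance : TopologicalSpace (LeftOrder G) :=
  TopologicalSpace.induced cone inferInstance

def restrict (o : LeftOrder G) (H : Subgroup G) : LeftOrder H where
  lt a b := o.lt a b
  irrefl a := o.irrefl a
  trans a b c hab hbc := o.trans _ _ _ hab hbc
  total a b := by
    rcases o.total (a : G) b with h | h | h
    · exact Or.inl h
    · exact Or.inr (Or.inl (Subtype.coe_injective h))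
    · exact Or.inr (Or.inr h)
  mul_left a b c h := by
    simpa using o.mul_left (a : G) b c h

def conj (o : LeftOrder G) (g : G) : LeftOrder G where
  lt a b := o.lt (g * a * g⁻¹) (g * b * g⁻¹)
  irrefl a := o.irrefl _
  trans a b c hab hbc := o.trans _ _ _ hab hbc
  total a b := by
    rcases o.total (g * a * g⁻¹) (g * b * g⁻¹) with h | h | h
    · exact Or.inl h
    · exact Or.inr (Or.inl (mul_left_cancel (mul_right_cancel h)))
    · exact Or.inr (Or.inr h)
  mul_left a b c h := by
    have key : ∀ x : G, g * (c * x) * g⁻¹ = (g * c * g⁻¹) * (g * x * g⁻¹) := by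
      intro x; group
    show o.lt (g * (c * a) * g⁻¹) (g * (c * b) * g⁻¹)
    rw [key a, key b]
    exact o.mul_left _ _ _ h

def IsConvex (o : LeftOrder G) (H : Subgroup G) : Prop :=
  ∀ g h₁ h₂ : G, h₁ ∈ H → h₂ ∈ H → o.le h₁ g → o.le g h₂ → g ∈ H

def IsConradian (o : LeftOrder G) : Prop :=
  ∀ f g : G, o.lt 1 f → o.lt 1 g → o.lt g (f * (g * g))

end LeftOrder

/-- A rational series of length `m` for `G`, together with identifications
`φ i` of the successive quotients `G_{i+1}/G_i` with subgroups of `ℚ`: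
`{1} = s 0 ◁ s 1 ◁ ⋯ ◁ s m = G`, each `s i` normal in `G`, each quotient
nontrivial torsion-free abelian of rank one (it embeds in `ℚ` via `φ i`,
a homomorphism on `s (i+1)` with kernel exactly `s i`). -/
def IsRationalSeries {G : Type*} [Group G]
    (m : ℕ) (s : ℕ → Subgroup G) (φ : ℕ → G → ℚ) : Prop :=
  s 0 = ⊥ ∧ s m = ⊤ ∧
  (∀ i ≤ m, (s i).Normal) ∧
  (∀ i < m, s i < s (i + 1)) ∧
  (∀ i < m, ∀ a ∈ s (i + 1), ∀ b ∈ s (i + 1), φ i (a * b) = φ i a + φ i b) ∧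
  (∀ i < m, ∀ g ∈ s (i + 1), (φ i g = 0 ↔ g ∈ s i))

/-- A Tararin series: a rational series such that for every `2 ≤ i ≤ m` some
element of `G_i = s i` acts by conjugation on `G_{i-1}/G_{i-2}` as
multiplication by a negative rational number (in the indexing below,
`j + 1` plays the role of `i`, so `1 ≤ j ≤ m - 1`). -/
def IsTararinSeries {G : Type*} [Group G] (m : ℕ) (s : ℕ → Subgroup G) : Prop :=
  ∃ φ : ℕ → G → ℚ, IsRationalSeries m s φ ∧
    ∀ j, 1 ≤ j → j < m →
      ∃ g ∈ s (j + 1), ∃ q : ℚ, q < 0 ∧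
        ∀ h ∈ s j, φ (j - 1) (g * h * g⁻¹) = q * φ (j - 1) h

theorem add_ne_zero_and_pos_iff {α : Type*} [AddCommGroup α] [LinearOrder α] [IsOrderedAddMonoid α]
    {a b : α} {p : Prop} (ha : a ≠ 0 → (0 < a ↔ p)) (hb : b ≠ 0 → (0 < b ↔ p))
    (hab : a ≠ 0 ∨ b ≠ 0) : a + b ≠ 0 ∧ (0 < a + b ↔ p) := by
  grind

theorem not_pos_mul_iff_pos {α : Type*} [Ring α] [LinearOrder α] [IsStrictOrderedRing α]
    {q a : α} (hq : q < 0) (ha : a ≠ 0) : ¬ (0 < q * a ↔ 0 < a) := by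
  rcases ha.lt_or_gt with ha | ha
  · exact fun h => ha.not_gt (h.1 (mul_pos_of_neg_of_neg hq ha))
  · exact fun h => (mul_neg_of_neg_of_pos hq ha).not_gt (h.2 ha)

theorem exists_nat_mul_eq_int_mul (a : ℚ) {b : ℚ} (hb : b ≠ 0) :
    ∃ k : ℕ, ∃ l : ℤ, 0 < k ∧ (k : ℚ) * a = l * b :=
  ⟨(a / b).den, (a / b).num, (a / b).pos, by
    rw [← Rat.den_mul_eq_num, mul_assoc, div_mul_cancel₀ a hb]⟩

theorem exists_nat_mul_eq_nat_mul {a b : ℚ} (ha : 0 < a) (hb : 0 < b) :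
    ∃ k l : ℕ, 0 < k ∧ 0 < l ∧ (k : ℚ) * a = l * b := by
  obtain ⟨k, l, hk, h⟩ := exists_nat_mul_eq_int_mul a hb.ne'
  have hl : (0 : ℚ) < l := (mul_pos_iff_of_pos_right hb).1 (h ▸ mul_pos (by exact_mod_cast hk) ha)
  lift l to ℕ using by exact_mod_cast hl.le
  exact ⟨k, l, hk, by exact_mod_cast hl, by exact_mod_cast h⟩

namespace LeftOrder

variable {G : Type*} [Group G]

theorem lt_iff_one_lt_inv_mul (o : LeftOrder G) (a b : G) : o.lt a b ↔ o.lt 1 (a⁻¹ * b) :=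
  ⟨fun h => by simpa using o.mul_left _ _ a⁻¹ h, fun h => by simpa using o.mul_left _ _ a h⟩

theorem ext_of_one_lt {o₁ o₂ : LeftOrder G} (h : ∀ g, o₁.lt 1 g ↔ o₂.lt 1 g) : o₁ = o₂ := by
  have hlt : o₁.lt = o₂.lt := by
    funext a b
    rw [o₁.lt_iff_one_lt_inv_mul, o₂.lt_iff_one_lt_inv_mul, h]
  cases o₁; cases o₂; cases hlt; rfl

def ofPositiveCone (P : G → Prop) (one : ¬ P 1) (mul : ∀ a b, P a → P b → P (a * b))
    (total : ∀ g, g ≠ 1 → P g ∨ P g⁻¹) : LeftOrder G where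
  lt a b := P (a⁻¹ * b)
  irrefl a := by simpa using one
  trans a b c hab hbc := by simpa [mul_assoc] using mul _ _ hab hbc
  total a b := by
    by_cases hab : a = b
    · exact Or.inr (Or.inl hab)
    · rcases total (a⁻¹ * b) (by rwa [ne_eq, inv_mul_eq_one]) with h | h
      · exact Or.inl h
      · exact Or.inr (Or.inr (by simpa using h))
  mul_left a b c h := by simpa [mul_assoc] using h

theorem ofPositiveCone_one_lt {P : G → Prop} {one mul total} {g : G} :
    (ofPositiveCone P one mul total).lt 1 g ↔ P g := by
  simp [ofPositiveCone]

variable {o : LeftOrder G} {a b c g : G}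

theorem le_trans (h₁ : o.le a b) (h₂ : o.le b c) : o.le a c := by
  rcases h₁ with h₁ | rfl
  · rcases h₂ with h₂ | rfl
    exacts [Or.inl (o.trans _ _ _ h₁ h₂), Or.inl h₁]
  · exact h₂

theorem lt_of_le_of_lt (h₁ : o.le a b) (h₂ : o.lt b c) : o.lt a c := by
  rcases h₁ with h₁ | rfl
  exacts [o.trans _ _ _ h₁ h₂, h₂]

theorem lt_of_lt_of_le (h₁ : o.lt a b) (h₂ : o.le b c) : o.lt a c := by
  rcases h₂ with h₂ | rfl
  exacts [o.trans _ _ _ h₁ h₂, h₁]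

theorem le_antisymm (h₁ : o.le a b) (h₂ : o.le b a) : a = b := by
  rcases h₁ with h₁ | rfl
  · rcases h₂ with h₂ | rfl
    exacts [absurd (o.trans _ _ _ h₁ h₂) (o.irrefl a), rfl]
  · rfl

theorem le_mul_left (c : G) (h : o.le a b) : o.le (c * a) (c * b) :=
  h.imp (o.mul_left a b c) (congrArg _)

theorem le_iff_one_le_inv_mul : o.le a b ↔ o.le 1 (a⁻¹ * b) := by
  rw [le, le, o.lt_iff_one_lt_inv_mul, eq_comm (a := 1), inv_mul_eq_one]

theorem one_lt_mul_of_le_of_lt (ha : o.le 1 a) (hb : o.lt 1 b) : o.lt 1 (a * b) :=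
  lt_of_le_of_lt ha (by simpa using o.mul_left 1 b a hb)

theorem one_lt_mul_of_lt_of_le (ha : o.lt 1 a) (hb : o.le 1 b) : o.lt 1 (a * b) :=
  lt_of_lt_of_le ha (by simpa using le_mul_left a hb)

theorem one_lt_inv_iff : o.lt 1 a⁻¹ ↔ o.lt a 1 := by
  simpa using (o.lt_iff_one_lt_inv_mul a 1).symm

theorem one_le_inv_iff : o.le 1 a⁻¹ ↔ o.le a 1 := by
  rw [le, le, one_lt_inv_iff, eq_comm, inv_eq_one]

theorem not_one_lt_of_one_lt_inv (h : o.lt 1 a⁻¹) : ¬ o.lt 1 a :=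
  fun h' => o.irrefl 1 (o.trans _ _ _ h' (one_lt_inv_iff.1 h))

theorem one_lt_or_one_lt_inv (ha : a ≠ 1) : o.lt 1 a ∨ o.lt 1 a⁻¹ := by
  rw [one_lt_inv_iff]
  rcases o.total 1 a with h | h | h
  exacts [Or.inl h, absurd h.symm ha, Or.inr h]

theorem one_le_or_le_one (o : LeftOrder G) (a : G) : o.le 1 a ∨ o.le a 1 := by
  rcases o.total 1 a with h | h | h
  exacts [Or.inl (Or.inl h), Or.inl (Or.inr h), Or.inr (Or.inl h)]

theorem one_le_pow (ha : o.le 1 a) : ∀ n : ℕ, o.le 1 (a ^ n)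
  | 0 => Or.inr (pow_zero a).symm
  | n + 1 => by
    rw [pow_succ]
    exact le_trans (one_le_pow ha n) (by simpa using le_mul_left (a ^ n) ha)

theorem pow_le_one (ha : o.le a 1) : ∀ n : ℕ, o.le (a ^ n) 1
  | 0 => Or.inr (pow_zero a)
  | n + 1 => by
    rw [pow_succ]
    exact le_trans (by simpa using le_mul_left (a ^ n) ha) (pow_le_one ha n)

theorem le_self_pow (ha : o.le 1 a) {n : ℕ} (hn : n ≠ 0) : o.le a (a ^ n) := by
  obtain ⟨n, rfl⟩ := Nat.exists_eq_succ_of_ne_zero hn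
  rw [pow_succ']
  simpa using le_mul_left a (one_le_pow ha n)

theorem pow_le_self (ha : o.le a 1) {n : ℕ} (hn : n ≠ 0) : o.le (a ^ n) a := by
  obtain ⟨n, rfl⟩ := Nat.exists_eq_succ_of_ne_zero hn
  rw [pow_succ']
  simpa using le_mul_left a (pow_le_one ha n)

def IsBoundedBy (o : LeftOrder G) (H : Subgroup G) (g : G) : Prop :=
  ∃ a ∈ H, ∃ b ∈ H, o.le a g ∧ o.le g b

variable {H K : Subgroup G}

theorem isConvex_iff_forall_isBoundedBy : o.IsConvex H ↔ ∀ g, o.IsBoundedBy H g → g ∈ H :=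
  ⟨fun hH g ⟨a, ha, b, hb, hag, hgb⟩ => hH g a b ha hb hag hgb,
    fun h g a b ha hb hag hgb => h g ⟨a, ha, b, hb, hag, hgb⟩⟩

theorem isConvex_bot (o : LeftOrder G) : o.IsConvex ⊥ := by
  rintro g a b ha hb hag hgb
  rw [Subgroup.mem_bot] at ha hb ⊢
  subst ha hb
  exact (le_antisymm hag hgb).symm

theorem isBoundedBy_of_mem (hg : g ∈ H) : o.IsBoundedBy H g :=
  ⟨g, hg, g, hg, Or.inr rfl, Or.inr rfl⟩

theorem IsBoundedBy.mono (hHK : H ≤ K) : o.IsBoundedBy H g → o.IsBoundedBy K g :=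
  fun ⟨a, ha, b, hb, hag, hgb⟩ => ⟨a, hHK ha, b, hHK hb, hag, hgb⟩

theorem IsBoundedBy.of_pow {n : ℕ} (hn : n ≠ 0) (h : o.IsBoundedBy H (g ^ n)) :
    o.IsBoundedBy H g := by
  obtain ⟨a, ha, b, hb, hag, hgb⟩ := h
  rcases o.one_le_or_le_one g with hg | hg
  · exact ⟨1, H.one_mem, b, hb, hg, le_trans (le_self_pow hg hn) hgb⟩
  · exact ⟨a, ha, 1, H.one_mem, le_trans hag (pow_le_self hg hn), hg⟩

theorem IsBoundedBy.mul (hH : H.Normal) {g₁ g₂ : G} (h₁ : o.IsBoundedBy H g₁)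
    (h₂ : o.IsBoundedBy H g₂) : o.IsBoundedBy H (g₁ * g₂) := by
  obtain ⟨a₁, ha₁, b₁, hb₁, hag₁, hgb₁⟩ := h₁
  obtain ⟨a₂, ha₂, b₂, hb₂, hag₂, hgb₂⟩ := h₂
  have key : ∀ c, g₁ * c * g₁⁻¹ * g₁ = g₁ * c := fun c => by group
  refine ⟨g₁ * a₂ * g₁⁻¹ * a₁, mul_mem (hH.conj_mem a₂ ha₂ g₁) ha₁,
    g₁ * b₂ * g₁⁻¹ * b₁, mul_mem (hH.conj_mem b₂ hb₂ g₁) hb₁, ?_, ?_⟩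
  · refine le_trans (le_mul_left (g₁ * a₂ * g₁⁻¹) hag₁) ?_
    rw [key]
    exact le_mul_left g₁ hag₂
  · refine le_trans (le_mul_left g₁ hgb₂) ?_
    have := le_mul_left (g₁ * b₂ * g₁⁻¹) hgb₁
    rwa [key] at this

theorem IsBoundedBy.inv (hH : H.Normal) (h : o.IsBoundedBy H g) : o.IsBoundedBy H g⁻¹ := by
  obtain ⟨a, ha, b, hb, hag, hgb⟩ := h
  refine ⟨g⁻¹ * b⁻¹ * g, by simpa using hH.conj_mem _ (H.inv_mem hb) g⁻¹,
    g⁻¹ * a⁻¹ * g, by simpa using hH.conj_mem _ (H.inv_mem ha) g⁻¹, ?_, ?_⟩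
  · simpa [mul_assoc] using le_mul_left (g⁻¹ * b⁻¹) hgb
  · simpa [mul_assoc] using le_mul_left (g⁻¹ * a⁻¹) hag

theorem IsBoundedBy.zpow (hH : H.Normal) (h : o.IsBoundedBy H g) (k : ℤ) :
    o.IsBoundedBy H (g ^ k) := by
  induction k using Int.induction_on with
  | zero => simpa using isBoundedBy_of_mem H.one_mem
  | succ n ih => rw [zpow_add_one]; exact ih.mul hH h
  | pred n ih => rw [zpow_sub_one]; exact ih.mul hH (h.inv hH)

theorem IsConvex.mem_of_pow_mem (hH : o.IsConvex H) {n : ℕ} (hn : n ≠ 0) (h : g ^ n ∈ H) :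
    g ∈ H :=
  isConvex_iff_forall_isBoundedBy.1 hH g ((isBoundedBy_of_mem h).of_pow hn)

theorem exists_one_lt_mem_notMem (o : LeftOrder G) (hg : g ∈ H) (hgK : g ∉ K) :
    ∃ x ∈ H, x ∉ K ∧ o.lt 1 x := by
  have hg1 : g ≠ 1 := by rintro rfl; exact hgK K.one_mem
  rcases one_lt_or_one_lt_inv (o := o) hg1 with h | h
  · exact ⟨g, hg, hgK, h⟩
  · exact ⟨g⁻¹, H.inv_mem hg, fun h' => hgK (by simpa using K.inv_mem h'), h⟩

theorem IsConvex.le_or_le (hH : o.IsConvex H) (hK : o.IsConvex K) : H ≤ K ∨ K ≤ H := by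
  by_contra! hHK
  obtain ⟨x, hxH, hxK⟩ := SetLike.not_le_iff_exists.1 hHK.1
  obtain ⟨y, hyK, hyH⟩ := SetLike.not_le_iff_exists.1 hHK.2
  obtain ⟨x, hxH, hxK, hx⟩ := o.exists_one_lt_mem_notMem hxH hxK
  obtain ⟨y, hyK, hyH, hy⟩ := o.exists_one_lt_mem_notMem hyK hyH
  rcases o.total x y with hxy | rfl | hyx
  · exact hxK (hK x 1 y K.one_mem hyK (Or.inl hx) (Or.inl hxy))
  · exact hxK hyK
  · exact hyH (hH y 1 x H.one_mem hxH (Or.inl hy) (Or.inl hyx))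

end LeftOrder

def IsLexPositive {G : Type*} [Group G] (s : ℕ → Subgroup G) (φ : ℕ → G → ℚ) {m : ℕ}
    (ε : Fin m → Prop) (g : G) : Prop :=
  ∃ j : Fin m, g ∈ s (j + 1) ∧ φ j g ≠ 0 ∧ (0 < φ j g ↔ ε j)

namespace IsRationalSeries

open LeftOrder

variable {G : Type*} [Group G] {m : ℕ} {s : ℕ → Subgroup G} {φ : ℕ → G → ℚ}
  {o : LeftOrder G} {i j : ℕ} {g h w x y z : G}

theorem bot (hrs : IsRationalSeries m s φ) : s 0 = ⊥ := hrs.1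

theorem top (hrs : IsRationalSeries m s φ) : s m = ⊤ := hrs.2.1

theorem normal (hrs : IsRationalSeries m s φ) (hi : i ≤ m) : (s i).Normal := hrs.2.2.1 i hi

theorem lt_succ (hrs : IsRationalSeries m s φ) (hi : i < m) : s i < s (i + 1) :=
  hrs.2.2.2.1 i hi

theorem map_mul (hrs : IsRationalSeries m s φ) (hj : j < m) (hx : x ∈ s (j + 1))
    (hy : y ∈ s (j + 1)) : φ j (x * y) = φ j x + φ j y :=
  hrs.2.2.2.2.1 j hj x hx y hy

theorem map_eq_zero_iff (hrs : IsRationalSeries m s φ) (hj : j < m) (hg : g ∈ s (j + 1)) :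
    φ j g = 0 ↔ g ∈ s j :=
  hrs.2.2.2.2.2 j hj g hg

theorem mono (hrs : IsRationalSeries m s φ) (hij : i ≤ j) (hj : j ≤ m) : s i ≤ s j := by
  induction j, hij using Nat.le_induction with
  | base => exact le_rfl
  | succ j _ ih => exact (ih (by omega)).trans (hrs.lt_succ (by omega)).le

theorem map_one (hrs : IsRationalSeries m s φ) (hj : j < m) : φ j 1 = 0 :=
  (hrs.map_eq_zero_iff hj (one_mem _)).2 (one_mem _)

theorem map_inv (hrs : IsRationalSeries m s φ) (hj : j < m) (hg : g ∈ s (j + 1)) :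
    φ j g⁻¹ = -φ j g := by
  have := hrs.map_mul hj hg (inv_mem hg)
  rw [mul_inv_cancel, hrs.map_one hj] at this
  linarith

theorem map_pow (hrs : IsRationalSeries m s φ) (hj : j < m) (hg : g ∈ s (j + 1)) :
    ∀ n : ℕ, φ j (g ^ n) = n * φ j g
  | 0 => by simpa using hrs.map_one hj
  | n + 1 => by
    rw [pow_succ, hrs.map_mul hj (pow_mem hg n) hg, hrs.map_pow hj hg n]
    push_cast
    ring

theorem map_zpow (hrs : IsRationalSeries m s φ) (hj : j < m) (hg : g ∈ s (j + 1)) :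
    ∀ k : ℤ, φ j (g ^ k) = k * φ j g
  | (n : ℕ) => by rw [zpow_natCast, hrs.map_pow hj hg]; push_cast; ring
  | .negSucc n => by
    rw [zpow_negSucc, hrs.map_inv hj (pow_mem hg _), hrs.map_pow hj hg]
    push_cast
    ring

theorem map_eq_zero_of_lt (hrs : IsRationalSeries m s φ) {k : ℕ} (hjk : j < k) (hk : k < m)
    (hg : g ∈ s (j + 1)) : φ k g = 0 :=
  (hrs.map_eq_zero_iff hk (hrs.mono (by omega) (by omega) hg)).2 (hrs.mono hjk hk.le hg)

theorem level_unique (hrs : IsRationalSeries m s φ) {k : ℕ} (hj : j < m) (hk : k < m)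
    (hgj : g ∈ s (j + 1)) (hgj0 : φ j g ≠ 0) (hgk : g ∈ s (k + 1)) (hgk0 : φ k g ≠ 0) :
    j = k := by
  by_contra hne
  rcases Nat.lt_or_gt_of_ne hne with h | h
  exacts [hgk0 (hrs.map_eq_zero_of_lt h hk hgj), hgj0 (hrs.map_eq_zero_of_lt h hj hgk)]

theorem exists_level (hrs : IsRationalSeries m s φ) (hg : g ≠ 1) :
    ∃ j < m, g ∈ s (j + 1) ∧ φ j g ≠ 0 := by
  have key : ∀ n, g ∈ s n → ∃ j < n, g ∉ s j ∧ g ∈ s (j + 1) := by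
    intro n
    induction n with
    | zero => intro h; rw [hrs.bot, Subgroup.mem_bot] at h; exact absurd h hg
    | succ n ih =>
      intro h
      by_cases hn : g ∈ s n
      · obtain ⟨j, hj, h'⟩ := ih hn
        exact ⟨j, by omega, h'⟩
      · exact ⟨n, by omega, hn, h⟩
  obtain ⟨j, hj, hgj, hgj'⟩ := key m (hrs.top ▸ Subgroup.mem_top g)
  exact ⟨j, hj, hgj', mt (hrs.map_eq_zero_iff hj hgj').1 hgj⟩

theorem exists_map_pos (hrs : IsRationalSeries m s φ) :
    ∃ w : Fin m → G, ∀ j : Fin m, w j ∈ s (j + 1) ∧ 0 < φ j (w j) := by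
  have : ∀ j : Fin m, ∃ w ∈ s (j + 1), 0 < φ j w := by
    intro ⟨j, hj⟩
    obtain ⟨x, hx, hxj⟩ := SetLike.exists_of_lt (hrs.lt_succ hj)
    have hx0 : φ j x ≠ 0 := mt (hrs.map_eq_zero_iff hj hx).1 hxj
    rcases hx0.lt_or_gt with h | h
    · exact ⟨x⁻¹, inv_mem hx, by rw [hrs.map_inv hj hx]; linarith⟩
    · exact ⟨x, hx, h⟩
  choose w hw using this
  exact ⟨w, hw⟩

theorem exists_pow_mul_zpow_mem (hrs : IsRationalSeries m s φ) (hj : j < m)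
    (hx : x ∈ s (j + 1)) (hy : y ∈ s (j + 1)) (hy0 : φ j y ≠ 0) :
    ∃ k : ℕ, ∃ l : ℤ, 0 < k ∧ x ^ k * y ^ l ∈ s j := by
  obtain ⟨k, l, hk, hkl⟩ := exists_nat_mul_eq_int_mul (φ j x) hy0
  refine ⟨k, -l, hk, (hrs.map_eq_zero_iff hj (mul_mem (pow_mem hx k) (zpow_mem hy _))).1 ?_⟩
  rw [hrs.map_mul hj (pow_mem hx k) (zpow_mem hy _), hrs.map_pow hj hx, hrs.map_zpow hj hy, hkl]
  push_cast
  ring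

theorem pos_iff_pos_of_one_lt (hrs : IsRationalSeries m s φ) (hj : j < m)
    (hconv : ∀ g ∈ s (j + 1), o.IsBoundedBy (s j) g → g ∈ s j)
    (hx : x ∈ s (j + 1)) (hy : y ∈ s (j + 1)) (hx1 : o.lt 1 x) (hy1 : o.lt 1 y)
    (hx0 : φ j x ≠ 0) (hy0 : φ j y ≠ 0) : 0 < φ j x ↔ 0 < φ j y := by
  suffices key : ∀ x ∈ s (j + 1), ∀ y ∈ s (j + 1), o.lt 1 x → o.lt 1 y → 0 < φ j x →
      0 ≤ φ j y from
    ⟨fun h => (key x hx y hy hx1 hy1 h).lt_of_ne' hy0,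
      fun h => (key y hy x hx hy1 hx1 h).lt_of_ne' hx0⟩
  intro x hx y hy hx1 hy1 hxφ
  by_contra! hyφ
  obtain ⟨k, l, hk, -, hkl⟩ := exists_nat_mul_eq_nat_mul hxφ (neg_pos.2 hyφ)
  have hw : x ^ k * y ^ l ∈ s j := by
    refine (hrs.map_eq_zero_iff hj (mul_mem (pow_mem hx k) (pow_mem hy l))).1 ?_
    rw [hrs.map_mul hj (pow_mem hx k) (pow_mem hy l), hrs.map_pow hj hx, hrs.map_pow hj hy, hkl]
    ring
  have hxw : o.le x (x ^ k * y ^ l) :=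
    le_trans (le_self_pow (Or.inl hx1) hk.ne')
      (by simpa using le_mul_left (x ^ k) (one_le_pow (Or.inl hy1) l))
  have hxj := hconv x hx ⟨1, one_mem _, _, hw, Or.inl hx1, hxw⟩
  exact hxφ.ne' ((hrs.map_eq_zero_iff hj hx).2 hxj)

theorem one_lt_iff_of_map_pos (hrs : IsRationalSeries m s φ) (hj : j < m)
    (hconv : ∀ g ∈ s (j + 1), o.IsBoundedBy (s j) g → g ∈ s j)
    (hw : w ∈ s (j + 1)) (hwφ : 0 < φ j w) (hg : g ∈ s (j + 1)) (hg0 : φ j g ≠ 0) :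
    o.lt 1 g ↔ (0 < φ j g ↔ o.lt 1 w) := by
  have ne_one : ∀ {x}, φ j x ≠ 0 → x ≠ 1 := fun h0 h1 => h0 (h1 ▸ hrs.map_one hj)
  have map_inv_ne_zero : ∀ {x}, x ∈ s (j + 1) → φ j x ≠ 0 → φ j x⁻¹ ≠ 0 := fun hx hx0 => by
    rwa [hrs.map_inv hj hx, neg_ne_zero]
  have of_one_lt : ∀ {x}, x ∈ s (j + 1) → φ j x ≠ 0 → o.lt 1 x → (0 < φ j x ↔ o.lt 1 w) := by
    intro x hx hx0 hx1
    rcases one_lt_or_one_lt_inv (ne_one hwφ.ne') with hw1 | hw1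
    · exact (hrs.pos_iff_pos_of_one_lt hj hconv hx hw hx1 hw1 hx0 hwφ.ne').trans
        (iff_of_true hwφ hw1)
    · have := hrs.pos_iff_pos_of_one_lt hj hconv hx (inv_mem hw) hx1 hw1 hx0
        (map_inv_ne_zero hw hwφ.ne')
      rw [hrs.map_inv hj hw] at this
      exact this.trans (iff_of_false (by linarith) (not_one_lt_of_one_lt_inv hw1))
  rcases one_lt_or_one_lt_inv (ne_one hg0) with hg1 | hg1
  · exact iff_of_true hg1 (of_one_lt hg hg0 hg1)
  · have := of_one_lt (inv_mem hg) (map_inv_ne_zero hg hg0) hg1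
    rw [hrs.map_inv hj hg, neg_pos] at this
    refine iff_of_false (not_one_lt_of_one_lt_inv hg1) fun h => hg0 ?_
    grind

theorem map_conj_inv (hrs : IsRationalSeries m s φ) (hj : j < m) {q : ℚ} (hq : q ≠ 0)
    (hact : ∀ h ∈ s (j + 1), φ j (g * h * g⁻¹) = q * φ j h) (hh : h ∈ s (j + 1)) :
    φ j (g⁻¹ * h * g) = q⁻¹ * φ j h := by
  have := hact _ (by simpa using (hrs.normal hj).conj_mem h hh g⁻¹)
  rw [show g * (g⁻¹ * h * g) * g⁻¹ = h by group] at this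
  rw [this, inv_mul_cancel_left₀ hq]

theorem exists_map_ne_zero_le (hrs : IsRationalSeries m s φ) (o : LeftOrder G) (hj : j < m)
    (hx : x ∈ s (j + 1)) : ∃ h ∈ s (j + 1), φ j h ≠ 0 ∧ o.le x h := by
  obtain ⟨y, hy, hyj⟩ := SetLike.exists_of_lt (hrs.lt_succ hj)
  obtain ⟨y, hy, hyj, hy1⟩ := o.exists_one_lt_mem_notMem hy hyj
  by_cases hx0 : φ j x = 0
  · refine ⟨x * y, mul_mem hx hy, ?_, by simpa using le_mul_left x (Or.inl hy1)⟩
    rw [hrs.map_mul hj hx hy, hx0, zero_add]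
    exact mt (hrs.map_eq_zero_iff hj hy).1 hyj
  · exact ⟨x, hx, hx0, Or.inr rfl⟩

theorem not_le_of_neg_action (hrs : IsRationalSeries m s φ) (hj : j < m)
    (hconv : ∀ g ∈ s (j + 1), o.IsBoundedBy (s j) g → g ∈ s j) {q : ℚ} (hq : q < 0)
    (hact : ∀ h ∈ s (j + 1), φ j (g * h * g⁻¹) = q * φ j h) (hg : o.le 1 g)
    (hx : x ∈ s (j + 1)) : ¬ o.le g x := by
  intro hgx
  obtain ⟨h, hh, hh0, hxh⟩ := hrs.exists_map_ne_zero_le o hj hx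
  have hgh := le_trans hgx hxh
  have hh1 : o.lt 1 h := by
    rcases le_trans hg hgh with h1 | h1
    exacts [h1, absurd (h1 ▸ hrs.map_one hj) hh0]
  have coh := fun {a} ha ha1 ha0 =>
    hrs.pos_iff_pos_of_one_lt (x := a) hj hconv ha hh ha1 hh1 ha0 hh0
  have hc : g * h * g⁻¹ ∈ s (j + 1) := (hrs.normal hj).conj_mem h hh g
  have hc0 : φ j (g * h * g⁻¹) ≠ 0 := by rw [hact h hh]; exact mul_ne_zero hq.ne hh0
  have hc1 : o.lt 1 (g * h * g⁻¹)⁻¹ := by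
    refine (one_lt_or_one_lt_inv fun h1 => hc0 (by rw [h1]; exact hrs.map_one hj)).resolve_left
      fun hc1 => ?_
    exact not_pos_mul_iff_pos hq hh0 (hact h hh ▸ coh hc hc1 hc0)
  -- `g⁻¹ h g h⁻¹` is positive, yet `φ j` maps it to `(q⁻¹ - 1) φ j h`, which has the sign
  -- opposite to that of `φ j h`
  have hk1 : o.lt 1 (g⁻¹ * h * g * h⁻¹) := by
    rw [show g⁻¹ * h * g * h⁻¹ = g⁻¹ * h * ((g * h * g⁻¹)⁻¹ * g) by group]
    exact one_lt_mul_of_le_of_lt (le_iff_one_le_inv_mul.1 hgh) (one_lt_mul_of_lt_of_le hc1 hg)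
  have hmem : g⁻¹ * h * g ∈ s (j + 1) := by simpa using (hrs.normal hj).conj_mem h hh g⁻¹
  have hk : φ j (g⁻¹ * h * g * h⁻¹) = (q⁻¹ - 1) * φ j h := by
    rw [hrs.map_mul hj hmem (inv_mem hh), hrs.map_conj_inv hj hq.ne hact hh, hrs.map_inv hj hh]
    ring
  have hq' : q⁻¹ - 1 < 0 := by linarith [inv_lt_zero.2 hq]
  exact not_pos_mul_iff_pos hq' hh0
    (hk ▸ coh (mul_mem hmem (inv_mem hh)) hk1 (hk ▸ mul_ne_zero hq'.ne hh0))

theorem not_isBoundedBy_of_neg_action (hrs : IsRationalSeries m s φ) (hj : j < m)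
    (hconv : ∀ g ∈ s (j + 1), o.IsBoundedBy (s j) g → g ∈ s j) {q : ℚ} (hq : q < 0)
    (hact : ∀ h ∈ s (j + 1), φ j (g * h * g⁻¹) = q * φ j h) :
    ¬ o.IsBoundedBy (s (j + 1)) g := by
  intro hbdd
  rcases o.one_le_or_le_one g with hg | hg
  · obtain ⟨-, -, x, hx, -, hgx⟩ := hbdd
    exact hrs.not_le_of_neg_action hj hconv hq hact hg hx hgx
  · obtain ⟨-, -, x, hx, -, hgx⟩ := hbdd.inv (hrs.normal hj)
    refine hrs.not_le_of_neg_action hj hconv (inv_lt_zero.2 hq) (fun h hh => ?_)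
      (one_le_inv_iff.2 hg) hx hgx
    simpa using hrs.map_conj_inv hj hq.ne hact hh

theorem mem_of_isBoundedBy_of_neg_action (hrs : IsRationalSeries m s φ) (hj : j + 1 < m)
    (hconv : ∀ g ∈ s (j + 1), o.IsBoundedBy (s j) g → g ∈ s j) (hg : g ∈ s (j + 1 + 1))
    {q : ℚ} (hq : q < 0) (hact : ∀ h ∈ s (j + 1), φ j (g * h * g⁻¹) = q * φ j h)
    (hz : z ∈ s (j + 1 + 1)) (hbdd : o.IsBoundedBy (s (j + 1)) z) : z ∈ s (j + 1) := by
  by_contra hzj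
  have hN := hrs.normal hj.le
  obtain ⟨k, l, hk, hmem⟩ :=
    hrs.exists_pow_mul_zpow_mem hj hg hz (mt (hrs.map_eq_zero_iff hj hz).1 hzj)
  have hgk : o.IsBoundedBy (s (j + 1)) (g ^ k) := by
    rw [show g ^ k = g ^ k * z ^ l * z ^ (-l) by group]
    exact (isBoundedBy_of_mem hmem).mul hN (hbdd.zpow hN (-l))
  exact hrs.not_isBoundedBy_of_neg_action (by omega) hconv hq hact (hgk.of_pow hk.ne')

theorem isConvex_of_neg_action (hrs : IsRationalSeries m s φ)
    (hact : ∀ j, 1 ≤ j → j < m → ∃ g ∈ s (j + 1), ∃ q : ℚ, q < 0 ∧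
      ∀ h ∈ s j, φ (j - 1) (g * h * g⁻¹) = q * φ (j - 1) h)
    (o : LeftOrder G) (hi : i ≤ m) : o.IsConvex (s i) := by
  suffices h : ∀ n ≤ m, ∀ i ≤ n, ∀ g ∈ s n, o.IsBoundedBy (s i) g → g ∈ s i from
    isConvex_iff_forall_isBoundedBy.2 fun g => h m le_rfl i hi g (hrs.top ▸ Subgroup.mem_top g)
  intro n
  induction n with
  | zero => intro _ i hi g hg _; rwa [Nat.le_zero.1 hi]
  | succ n ih =>
    intro hn i hi g hg hgi
    have hstep : ∀ g ∈ s (n + 1), o.IsBoundedBy (s n) g → g ∈ s n := by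
      rcases n with _ | j
      · intro g _ hg
        rw [hrs.bot] at hg ⊢
        exact isConvex_iff_forall_isBoundedBy.1 o.isConvex_bot g hg
      · obtain ⟨g₀, hg₀, q, hq, hg₀act⟩ := hact (j + 1) (by omega) (by omega)
        rw [Nat.add_sub_cancel] at hg₀act
        exact fun z hz => hrs.mem_of_isBoundedBy_of_neg_action (by omega)
          (ih (by omega) j (by omega)) hg₀ hq hg₀act hz
    rcases Nat.of_le_succ hi with hi | rfl
    · exact ih (by omega) i hi g (hstep g hg (hgi.mono (hrs.mono hi (by omega)))) hgi
    · exact hg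

end IsRationalSeries

namespace IsRationalSeries

open LeftOrder

variable {G : Type*} [Group G] {m : ℕ} {s : ℕ → Subgroup G} {φ : ℕ → G → ℚ}
  {o : LeftOrder G} {i j : ℕ} {f g x y : G} {ε : Fin m → Prop}

theorem isLexPositive_iff (hrs : IsRationalSeries m s φ) (hj : j < m) (hg : g ∈ s (j + 1))
    (hg0 : φ j g ≠ 0) : IsLexPositive s φ ε g ↔ (0 < φ j g ↔ ε ⟨j, hj⟩) := by
  refine ⟨fun ⟨k, hgk, hgk0, hε⟩ => ?_, fun h => ⟨⟨j, hj⟩, hg, hg0, h⟩⟩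
  obtain rfl : k = ⟨j, hj⟩ := Fin.ext (hrs.level_unique k.2 hj hgk hgk0 hg hg0)
  exact hε

theorem not_isLexPositive_one (hrs : IsRationalSeries m s φ) (ε : Fin m → Prop) :
    ¬ IsLexPositive s φ ε 1 :=
  fun ⟨j, _, h0, _⟩ => h0 (hrs.map_one j.2)

theorem isLexPositive_of_map_eq_add (hrs : IsRationalSeries m s φ)
    (hf : IsLexPositive s φ ε f) (hg : IsLexPositive s φ ε g)
    (hx : ∀ j < m, f ∈ s (j + 1) → g ∈ s (j + 1) → x ∈ s (j + 1) ∧ φ j x = φ j f + φ j g) :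
    IsLexPositive s φ ε x := by
  obtain ⟨jf, hf1, hf0, -⟩ := id hf
  obtain ⟨jg, hg1, hg0, -⟩ := id hg
  obtain ⟨j, hjf, hjg, hj⟩ : ∃ j : Fin m, jf ≤ j ∧ jg ≤ j ∧ (j = jf ∨ j = jg) :=
    ⟨max jf jg, le_max_left _ _, le_max_right _ _, max_choice jf jg⟩
  have hfj : f ∈ s (j + 1) := hrs.mono (Nat.add_le_add_right hjf 1) j.2 hf1
  have hgj : g ∈ s (j + 1) := hrs.mono (Nat.add_le_add_right hjg 1) j.2 hg1
  obtain ⟨hxj, hφx⟩ := hx j j.2 hfj hgj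
  have sign : ∀ {y}, IsLexPositive s φ ε y → y ∈ s (j + 1) → φ j y ≠ 0 → (0 < φ j y ↔ ε j) :=
    fun hy hyj hy0 => (hrs.isLexPositive_iff j.2 hyj hy0).1 hy
  have hne : φ j f ≠ 0 ∨ φ j g ≠ 0 := by
    rcases hj with rfl | rfl
    exacts [Or.inl hf0, Or.inr hg0]
  obtain ⟨hx0, hxε⟩ := add_ne_zero_and_pos_iff (sign hf hfj) (sign hg hgj) hne
  exact ⟨j, hxj, hφx ▸ hx0, hφx ▸ hxε⟩

theorem isLexPositive_inv_of_not (hrs : IsRationalSeries m s φ) (hg : g ≠ 1)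
    (h : ¬ IsLexPositive s φ ε g) : IsLexPositive s φ ε g⁻¹ := by
  obtain ⟨j, hj, hgj, hg0⟩ := hrs.exists_level hg
  rw [hrs.isLexPositive_iff hj hgj hg0] at h
  refine ⟨⟨j, hj⟩, inv_mem hgj, by rwa [hrs.map_inv hj hgj, neg_ne_zero], ?_⟩
  rw [hrs.map_inv hj hgj, neg_pos]
  grind

def lexOrder (hrs : IsRationalSeries m s φ) (ε : Fin m → Prop) : LeftOrder G :=
  ofPositiveCone (IsLexPositive s φ ε) (hrs.not_isLexPositive_one ε)
    (fun _ _ ha hb => hrs.isLexPositive_of_map_eq_add ha hb fun _ hj ha hb =>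
      ⟨mul_mem ha hb, hrs.map_mul hj ha hb⟩)
    (fun _ hg => or_iff_not_imp_left.2 (hrs.isLexPositive_inv_of_not hg))

theorem one_lt_iff_isLexPositive (hrs : IsRationalSeries m s φ)
    (hconv : ∀ i ≤ m, o.IsConvex (s i)) {w : Fin m → G}
    (hw : ∀ j : Fin m, w j ∈ s (j + 1) ∧ 0 < φ j (w j)) (g : G) :
    o.lt 1 g ↔ IsLexPositive s φ (fun j => o.lt 1 (w j)) g := by
  rcases eq_or_ne g 1 with rfl | hg
  · exact iff_of_false (o.irrefl 1) (hrs.not_isLexPositive_one _)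
  obtain ⟨j, hj, hgj, hg0⟩ := hrs.exists_level hg
  rw [hrs.isLexPositive_iff hj hgj hg0]
  exact hrs.one_lt_iff_of_map_pos hj
    (fun g _ hg => isConvex_iff_forall_isBoundedBy.1 (hconv j hj.le) g hg)
    (hw ⟨j, hj⟩).1 (hw ⟨j, hj⟩).2 hgj hg0

theorem card_leftOrder (hrs : IsRationalSeries m s φ)
    (hconv : ∀ o : LeftOrder G, ∀ i ≤ m, o.IsConvex (s i)) : Nat.card (LeftOrder G) = 2 ^ m := by
  obtain ⟨w, hw⟩ := hrs.exists_map_pos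
  let signs : LeftOrder G → Fin m → Prop := fun o j => o.lt 1 (w j)
  have hsigns : Function.Bijective signs := by
    refine ⟨fun o₁ o₂ h => ext_of_one_lt fun g => ?_, fun ε => ⟨hrs.lexOrder ε, ?_⟩⟩
    · rw [hrs.one_lt_iff_isLexPositive (hconv o₁) hw, hrs.one_lt_iff_isLexPositive (hconv o₂) hw]
      exact Iff.of_eq (congrArg (IsLexPositive s φ · g) h)
    · funext j
      refine propext (ofPositiveCone_one_lt.trans ?_)
      rw [hrs.isLexPositive_iff j.2 (hw j).1 (hw j).2.ne']
      exact iff_true_left (hw j).2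
  rw [Nat.card_eq_of_bijective signs hsigns]
  simp

theorem isConradian (hrs : IsRationalSeries m s φ) (hconv : ∀ i ≤ m, o.IsConvex (s i)) :
    o.IsConradian := by
  obtain ⟨w, hw⟩ := hrs.exists_map_pos
  intro f g hf hg
  rw [hrs.one_lt_iff_isLexPositive hconv hw] at hf hg
  rw [o.lt_iff_one_lt_inv_mul, hrs.one_lt_iff_isLexPositive hconv hw]
  refine hrs.isLexPositive_of_map_eq_add hf hg fun j hj hfj hgj => ?_
  have hggg := mul_mem hfj (mul_mem hgj hgj)
  refine ⟨mul_mem (inv_mem hgj) hggg, ?_⟩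
  rw [hrs.map_mul hj (inv_mem hgj) hggg, hrs.map_mul hj hfj (mul_mem hgj hgj),
    hrs.map_mul hj hgj hgj, hrs.map_inv hj hgj]
  ring

theorem succ_le_of_isConvex (hrs : IsRationalSeries m s φ) (hi : i < m) {H : Subgroup G}
    (hH : o.IsConvex H) (hsub : s i ≤ H) (hy : y ∈ H) (hyi : y ∈ s (i + 1)) (hy0 : y ∉ s i) :
    s (i + 1) ≤ H := by
  intro x hx
  obtain ⟨k, l, hk, hmem⟩ :=
    hrs.exists_pow_mul_zpow_mem hi hx hyi (mt (hrs.map_eq_zero_iff hi hyi).1 hy0)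
  refine hH.mem_of_pow_mem hk.ne' ?_
  rw [show x ^ k = x ^ k * y ^ l * y ^ (-l) by group]
  exact mul_mem (hsub hmem) (zpow_mem hy _)

theorem isConvex_iff (hrs : IsRationalSeries m s φ) (hconv : ∀ i ≤ m, o.IsConvex (s i))
    {H : Subgroup G} : o.IsConvex H ↔ ∃ i ≤ m, H = s i := by
  classical
  refine ⟨fun hH => ?_, fun ⟨i, hi, hH⟩ => hH ▸ hconv i hi⟩
  set i := Nat.findGreatest (fun i => s i ≤ H) m
  have hsub : s i ≤ H := Nat.findGreatest_spec (P := fun i => s i ≤ H) (Nat.zero_le m)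
    (by rw [hrs.bot]; exact bot_le)
  have him : i ≤ m := Nat.findGreatest_le m
  refine ⟨i, him, le_antisymm ?_ hsub⟩
  rcases him.lt_or_eq with hi | hi
  · have hmax : ¬ s (i + 1) ≤ H := Nat.findGreatest_is_greatest (Nat.lt_succ_self _) hi
    have hH' : H ≤ s (i + 1) := (hH.le_or_le (hconv _ hi)).resolve_right hmax
    intro y hy
    by_contra hyi
    exact hmax (hrs.succ_le_of_isConvex hi hH hsub hy (hH' hy) hyi)
  · rw [hi, hrs.top]
    exact le_top

end IsRationalSeries

theorem tararin_group_orderings_general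
    {G : Type*} [Group G]
    (m : ℕ) (s : ℕ → Subgroup G) (hts : IsTararinSeries m s) :
    Nat.card (LeftOrder G) = 2 ^ m ∧
    (∀ o : LeftOrder G, o.IsConradian) ∧
    (∀ (o : LeftOrder G) (H : Subgroup G), o.IsConvex H ↔ ∃ i ≤ m, H = s i) := by
  obtain ⟨φ, hrs, hact⟩ := hts
  have hconv : ∀ o : LeftOrder G, ∀ i ≤ m, o.IsConvex (s i) :=
    fun o _ hi => hrs.isConvex_of_neg_action hact o hi
  exact ⟨hrs.card_leftOrder hconv, fun o => hrs.isConradian (hconv o),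
    fun o _ => hrs.isConvex_iff (hconv o)⟩

/-- A Tararin group `G` with rational series
`{1} = G₀ ◁ ⋯ ◁ G_m = G` admits exactly `2 ^ m` left-orderings, all its
left-orderings are Conradian, and in every left-ordering the convex subgroups
are exactly `G₀, …, G_m`. -/
theorem tararin_group_orderings
    {G : Type*} [Group G]
    (hlo : Nonempty (LeftOrder G))
    (m : ℕ) (s : ℕ → Subgroup G) (hts : IsTararinSeries m s) :
    Nat.card (LeftOrder G) = 2 ^ m ∧
    (∀ o : LeftOrder G, o.IsConradian) ∧
    (∀ (o : LeftOrder G) (H : Subgroup G), o.IsConvex H ↔ ∃ i ≤ m, H = s i) :=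
  tararin_group_orderings_general m s hts
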